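/- arXiv:1608.06790 — 5 statements merged into one kernel-verified Lean document; each statement's English description precedes it below -/
import Mathlib

section
/- For every multi-index (k₁,…,k_m) ∈ ℕ^m and every z = (z₁,…,z_m) ∈ ℂ^m, the m-dimensional Segal–Bargmann transform sends the corresponding Hermite basis function to the monomial: (2π)^{-m/2} ∫_{ℝ^m} exp(−z·z/2 + x·z − x·x/4) · (∏_{j=1}^m H_{k_j}(x_j)) e^{−|x|²/4} dx = z₁^{k₁} ⋯ z_m^{k_m}. -/
/-!
Multiplying the Segal–Bargmann kernel by `e^{-|x|²/4}` gives `∏ⱼ e^{-(xⱼ - zⱼ)²/2}`, so by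
Fubini the integral splits into one-dimensional factors `∫ Hₖ(x) e^{-(x - z)²/2} dx`. Since
`(Q e^{-(x-z)²/2})' = (Q' - (x - z) Q) e^{-(x-z)²/2}` integrates to zero, the recursion
`H_{k+1} = x Hₖ - Hₖ'` turns into `∫ H_{k+1} e^{-(x-z)²/2} = z ∫ Hₖ e^{-(x-z)²/2}`, and the
Gaussian integral `∫ e^{-(x-z)²/2} dx = √(2π)` (valid for complex `z`) starts the induction.
-/

open MeasureTheory Polynomial
open scoped Real Complex

lemma integrable_eval_mul_exp_neg_mul_sq (Q : ℂ[X]) {b : ℝ} (hb : 0 < b) :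
    Integrable fun x : ℝ => Q.eval (x : ℂ) * (rexp (-b * x ^ 2) : ℂ) := by
  simp_rw [eval_eq_sum_range, Finset.sum_mul, mul_assoc]
  refine integrable_finsetSum _ fun i _ => Integrable.const_mul ?_ _
  have h := integrable_rpow_mul_exp_neg_mul_sq hb (s := i) (by linarith [i.cast_nonneg (α := ℝ)])
  simp_rw [Real.rpow_natCast] at h
  exact_mod_cast h.ofReal

lemma norm_cexp_neg_sq_sub_div_two_le (z : ℂ) (x : ℝ) :
    ‖cexp (-((x : ℂ) - z) ^ 2 / 2)‖ ≤ rexp (‖z‖ ^ 2 / 2) * rexp (-(1 / 4) * x ^ 2) := by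
  rw [Complex.norm_exp, ← Real.exp_add, Real.exp_le_exp, Complex.sq_norm, Complex.normSq_apply]
  have h : (-((x : ℂ) - z) ^ 2 / 2).re = z.im ^ 2 / 2 - (x - z.re) ^ 2 / 2 := by
    simp only [pow_two, Complex.div_ofNat_re, Complex.neg_re, Complex.mul_re, Complex.sub_re,
      Complex.sub_im, Complex.ofReal_re, Complex.ofReal_im]
    ring
  rw [h]
  nlinarith [sq_nonneg (x / 2 - z.re)]

lemma integrable_eval_mul_cexp_neg_sq_sub (Q : ℂ[X]) (z : ℂ) :
    Integrable fun x : ℝ => Q.eval (x : ℂ) * cexp (-((x : ℂ) - z) ^ 2 / 2) := by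
  refine ((integrable_eval_mul_exp_neg_mul_sq Q (b := 1 / 4) (by norm_num)).norm.const_mul
    (rexp (‖z‖ ^ 2 / 2))).mono' (by fun_prop) (ae_of_all _ fun x => ?_)
  rw [norm_mul, norm_mul, Complex.norm_real, Real.norm_of_nonneg (Real.exp_pos _).le]
  calc ‖Q.eval (x : ℂ)‖ * ‖cexp (-((x : ℂ) - z) ^ 2 / 2)‖
      ≤ ‖Q.eval (x : ℂ)‖ * (rexp (‖z‖ ^ 2 / 2) * rexp (-(1 / 4) * x ^ 2)) := by
        gcongr; exact norm_cexp_neg_sq_sub_div_two_le z x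
    _ = _ := by ring

lemma hasDerivAt_eval_mul_cexp_neg_sq_sub (Q : ℂ[X]) (z : ℂ) (x : ℝ) :
    HasDerivAt (fun t : ℝ => Q.eval (t : ℂ) * cexp (-((t : ℂ) - z) ^ 2 / 2))
      ((derivative Q - (X - C z) * Q).eval (x : ℂ) * cexp (-((x : ℂ) - z) ^ 2 / 2)) x := by
  have hexp : HasDerivAt (fun w : ℂ => cexp (-(w - z) ^ 2 / 2))
      (cexp (-((x : ℂ) - z) ^ 2 / 2) * -((x : ℂ) - z)) x := by
    refine (((hasDerivAt_id (x : ℂ)).sub_const z).pow 2).neg.div_const 2 |>.cexp |>.congr_deriv ?_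
    simp only [id_eq, Pi.neg_apply, Pi.pow_apply, Nat.cast_ofNat, mul_one]
    ring
  refine ((Q.hasDerivAt (x : ℂ)).comp_ofReal.mul hexp.comp_ofReal).congr_deriv ?_
  simp only [eval_sub, eval_mul, eval_X, eval_C]
  ring

lemma integral_eval_mul_cexp_neg_sq_sub_eq_zero (Q : ℂ[X]) (z : ℂ) :
    ∫ x : ℝ, (derivative Q - (X - C z) * Q).eval (x : ℂ) * cexp (-((x : ℂ) - z) ^ 2 / 2) = 0 :=
  integral_eq_zero_of_hasDerivAt_of_integrable (hasDerivAt_eval_mul_cexp_neg_sq_sub Q z)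
    (integrable_eval_mul_cexp_neg_sq_sub _ z) (integrable_eval_mul_cexp_neg_sq_sub Q z)

lemma integral_cexp_neg_sq_sub_div_two (z : ℂ) :
    ∫ x : ℝ, cexp (-((x : ℂ) - z) ^ 2 / 2) = (√(2 * π) : ℂ) := by
  have h (x : ℝ) : -((x : ℂ) - z) ^ 2 / 2 = -(1 / 2) * (x : ℂ) ^ 2 + z * x + -z ^ 2 / 2 := by ring
  simp_rw [h]
  rw [integral_cexp_quadratic (by norm_num), Real.sqrt_eq_rpow, Complex.ofReal_cpow (by positivity),
    show -z ^ 2 / 2 - z ^ 2 / (4 * -(1 / 2)) = 0 by ring, Complex.exp_zero, mul_one]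
  push_cast
  ring_nf

lemma integral_X_mul_sub_derivative_mul_cexp_neg_sq_sub (Q : ℂ[X]) (z : ℂ) :
    ∫ x : ℝ, (X * Q - derivative Q).eval (x : ℂ) * cexp (-((x : ℂ) - z) ^ 2 / 2) =
      z * ∫ x : ℝ, Q.eval (x : ℂ) * cexp (-((x : ℂ) - z) ^ 2 / 2) := by
  have h (x : ℝ) : (X * Q - derivative Q).eval (x : ℂ) * cexp (-((x : ℂ) - z) ^ 2 / 2) =
      z * (Q.eval (x : ℂ) * cexp (-((x : ℂ) - z) ^ 2 / 2)) -
        (derivative Q - (X - C z) * Q).eval (x : ℂ) * cexp (-((x : ℂ) - z) ^ 2 / 2) := by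
    simp only [eval_sub, eval_mul, eval_X, eval_C]; ring
  simp_rw [h]
  rw [integral_sub ((integrable_eval_mul_cexp_neg_sq_sub Q z).const_mul z)
    (integrable_eval_mul_cexp_neg_sq_sub _ z), integral_const_mul,
    integral_eval_mul_cexp_neg_sq_sub_eq_zero, sub_zero]

lemma integral_aeval_hermite_mul_cexp_neg_sq_sub (k : ℕ) (z : ℂ) :
    ∫ x : ℝ, aeval (x : ℂ) (hermite k) * cexp (-((x : ℂ) - z) ^ 2 / 2) = √(2 * π) * z ^ k := by
  simp_rw [← eval_map_algebraMap]
  induction k with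
  | zero => simp [integral_cexp_neg_sq_sub_div_two]
  | succ k ih =>
    rw [hermite_succ, Polynomial.map_sub, Polynomial.map_mul, map_X, ← derivative_map,
      integral_X_mul_sub_derivative_mul_cexp_neg_sq_sub, ih]
    ring

lemma segalBargmann_kernel_mul_gaussian_eq_prod {ι : Type*} [Fintype ι] (x : ι → ℝ) (z : ι → ℂ) :
    cexp (-(∑ j, z j ^ 2) / 2 + (∑ j, (x j : ℂ) * z j) - (∑ j, (x j : ℂ) ^ 2) / 4) *
        (rexp (-(∑ j, x j ^ 2) / 4) : ℂ) = ∏ j, cexp (-((x j : ℂ) - z j) ^ 2 / 2) := by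
  rw [Complex.ofReal_exp, ← Complex.exp_add, ← Complex.exp_sum]
  congr 1
  push_cast
  simp only [Finset.sum_div, ← Finset.sum_neg_distrib, ← Finset.sum_add_distrib,
    ← Finset.sum_sub_distrib]
  exact Finset.sum_congr rfl fun j _ => by ring

/-- The `m`-dimensional Segal–Bargmann transform sends the Hermite basis function
`(∏_j H_{k_j}(x_j)) e^{-|x|²/4}` to the monomial `z₁^{k₁} ⋯ z_m^{k_m}`. -/
theorem segalBargmann_multiHermite (m : ℕ) (k : Fin m → ℕ) (z : Fin m → ℂ) :
    ((Real.sqrt (2 * Real.pi) ^ m : ℝ) : ℂ)⁻¹ *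
      ∫ x : Fin m → ℝ,
        Complex.exp (-(∑ j, z j ^ 2) / 2 + (∑ j, (x j : ℂ) * z j) - (∑ j, (x j : ℂ) ^ 2) / 4)
          * (∏ j, aeval ((x j : ℂ)) (hermite (k j)))
          * (Real.exp (-(∑ j, x j ^ 2) / 4) : ℂ)
    = ∏ j, z j ^ k j := by
  have h (x : Fin m → ℝ) :
      Complex.exp (-(∑ j, z j ^ 2) / 2 + (∑ j, (x j : ℂ) * z j) - (∑ j, (x j : ℂ) ^ 2) / 4)
          * (∏ j, aeval ((x j : ℂ)) (hermite (k j)))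
          * (Real.exp (-(∑ j, x j ^ 2) / 4) : ℂ)
        = ∏ j, aeval ((x j : ℂ)) (hermite (k j)) * cexp (-((x j : ℂ) - z j) ^ 2 / 2) := by
    rw [mul_right_comm, segalBargmann_kernel_mul_gaussian_eq_prod, mul_comm,
      ← Finset.prod_mul_distrib]
  simp_rw [h]
  rw [integral_fintype_prod_volume_eq_prod
    (fun j (t : ℝ) => aeval (t : ℂ) (hermite (k j)) * cexp (-((t : ℂ) - z j) ^ 2 / 2))]
  simp_rw [integral_aeval_hermite_mul_cexp_neg_sq_sub, Finset.prod_mul_distrib]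
  have hsqrt : ((√(2 * π) : ℝ) : ℂ) ≠ 0 := by exact_mod_cast (Real.sqrt_pos.2 (by positivity)).ne'
  rw [Finset.prod_const, Finset.card_univ, Fintype.card_fin, Complex.ofReal_pow, ← mul_assoc,
    inv_mul_cancel₀ (pow_ne_zero m hsqrt), one_mul]
end

section
/- For every f ∈ L²(ℝ^m), the Segal–Bargmann transform B[f] : ℂ^m → ℂ, B[f](z) = (2π)^{-m/2} ∫_{ℝ^m} exp(−z·z/2 + x·z − x·x/4) f(x) dx, is an entire function, i.e. it is complex differentiable (holomorphic) at every point of ℂ^m. -/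
open MeasureTheory

/-- The `m`-dimensional Segal–Bargmann transform of `f : ℝ^m → ℂ`:
`B[f](z) = (2π)^{-m/2} ∫_{ℝ^m} exp(-z·z/2 + x·z - x·x/4) f(x) dx`. -/
noncomputable def segalBargmannM (m : ℕ) (f : (Fin m → ℝ) → ℂ) (z : Fin m → ℂ) : ℂ :=
  ((Real.sqrt (2 * Real.pi) ^ m : ℝ) : ℂ)⁻¹ *
    ∫ x : Fin m → ℝ,
      Complex.exp (-(∑ j, z j ^ 2) / 2 + (∑ j, (x j : ℂ) * z j) - (∑ j, (x j : ℂ) ^ 2) / 4) * f x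

/-!
The kernel factors as `exp (-z·z/2) · exp (x·z) · exp (-x·x/4)`. The first factor is entire, and
the Gaussian `exp (-x·x/4)` turns `f ∈ L²` into a function `g` with exponential moments of every
order, by Cauchy–Schwarz against `exp (c Σ|xⱼ| - x·x/4) ∈ L²`. The Laplace transform
`z ↦ ∫ exp (x·z) g x dx` of such a `g` is entire: differentiating under the integral sign only
costs a factor `‖x‖`, which one more exponential moment dominates.
-/

open scoped Complex

section ExponentialMoments

variable {α V : Type*} [MeasurableSpace α] {μ : Measure α} [NormedAddCommGroup V] [NormedSpace ℂ V]

theorem norm_cexp_apply_le (L : V →L[ℂ] ℂ) (z : V) : ‖cexp (L z)‖ ≤ Real.exp (‖L‖ * ‖z‖) := by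
  rw [Complex.norm_exp]
  exact Real.exp_le_exp.2 ((Complex.re_le_norm _).trans (L.le_opNorm z))

theorem differentiable_integral_cexp_apply_mul {ℓ : α → V →L[ℂ] ℂ} {g : α → ℂ}
    (hℓ : AEStronglyMeasurable ℓ μ) (hg : AEStronglyMeasurable g μ)
    (hmom : ∀ R : ℝ, Integrable (fun x ↦ Real.exp (R * ‖ℓ x‖) * ‖g x‖) μ) :
    Differentiable ℂ fun z ↦ ∫ x, cexp (ℓ x z) * g x ∂μ := by
  intro z₀
  have hF_meas (z : V) : AEStronglyMeasurable (fun x ↦ cexp (ℓ x z) * g x) μ :=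
    (Complex.continuous_exp.comp_aestronglyMeasurable
      ((ContinuousLinearMap.apply ℂ ℂ z).continuous.comp_aestronglyMeasurable hℓ)).mul hg
  have hF_int : Integrable (fun x ↦ cexp (ℓ x z₀) * g x) μ := by
    refine (hmom ‖z₀‖).mono' (hF_meas z₀) (.of_forall fun x ↦ ?_)
    rw [norm_mul, mul_comm ‖z₀‖]
    gcongr
    exact norm_cexp_apply_le _ _
  -- the unit ball around `z₀` costs `‖z₀‖ + 1`, and `‖ℓ x‖ ≤ exp ‖ℓ x‖` one more
  refine (hasFDerivAt_integral_of_dominated_of_fderiv_le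
    (F' := fun z x ↦ (cexp (ℓ x z) * g x) • ℓ x) (Metric.ball_mem_nhds z₀ one_pos)
    (.of_forall hF_meas) hF_int ((hF_meas z₀).smul hℓ) ?_ (hmom (‖z₀‖ + 2)) ?_).differentiableAt
  · refine .of_forall fun x z hz ↦ ?_
    have hzR : ‖z‖ ≤ ‖z₀‖ + 1 := (norm_lt_of_mem_ball hz).le
    calc ‖(cexp (ℓ x z) * g x) • ℓ x‖
        ≤ Real.exp ((‖z₀‖ + 1) * ‖ℓ x‖) * ‖g x‖ * Real.exp ‖ℓ x‖ := by
          rw [norm_smul, norm_mul]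
          gcongr
          · exact (norm_cexp_apply_le _ _).trans (Real.exp_le_exp.2 (by rw [mul_comm]; gcongr))
          · exact (Real.add_one_le_exp _).trans' (le_add_of_nonneg_right zero_le_one)
      _ = Real.exp ((‖z₀‖ + 2) * ‖ℓ x‖) * ‖g x‖ := by
          rw [mul_right_comm, ← Real.exp_add]
          congr 2
          ring
  · refine .of_forall fun x z _ ↦ ?_
    simpa only [smul_smul, mul_comm (g x)] using (ℓ x).hasFDerivAt.cexp.mul_const (g x)

end ExponentialMoments

section Coordinates

variable {ι : Type*} [Fintype ι]

noncomputable def dotProductCLM (x : ι → ℝ) : (ι → ℂ) →L[ℂ] ℂ :=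
  ∑ j, (x j : ℂ) • ContinuousLinearMap.proj j

@[simp]
theorem dotProductCLM_apply (x : ι → ℝ) (z : ι → ℂ) :
    dotProductCLM x z = ∑ j, (x j : ℂ) * z j := by
  simp [dotProductCLM]

@[fun_prop]
theorem continuous_dotProductCLM : Continuous (dotProductCLM (ι := ι)) := by
  unfold dotProductCLM
  fun_prop

theorem norm_dotProductCLM_le (x : ι → ℝ) : ‖dotProductCLM x‖ ≤ ∑ j, |x j| := by
  refine ContinuousLinearMap.opNorm_le_bound _ (by positivity) fun v ↦ ?_
  rw [dotProductCLM_apply, Finset.sum_mul]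
  refine (norm_sum_le _ _).trans (Finset.sum_le_sum fun j _ ↦ ?_)
  rw [norm_mul, Complex.norm_real, Real.norm_eq_abs]
  gcongr
  exact norm_le_pi_norm v j

theorem integrable_exp_mul_abs_sub_sq_div_two (a : ℝ) :
    Integrable fun t : ℝ ↦ Real.exp (a * |t| - t ^ 2 / 2) := by
  refine ((integrable_exp_neg_mul_sq (by norm_num : (0 : ℝ) < 4⁻¹)).const_mul
    (Real.exp (a ^ 2))).mono' (by fun_prop) (.of_forall fun t ↦ ?_)
  rw [Real.norm_of_nonneg (Real.exp_pos _).le, ← Real.exp_add]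
  gcongr
  nlinarith [sq_nonneg (|t| / 2 - a), sq_abs t]

theorem memLp_two_exp_mul_sum_abs_sub_sum_sq (c : ℝ) :
    MemLp (fun x : ι → ℝ ↦ Real.exp (c * ∑ j, |x j| - (∑ j, x j ^ 2) / 4)) 2 := by
  rw [memLp_two_iff_integrable_sq (by fun_prop)]
  refine (Integrable.fintype_prod fun (_ : ι) ↦ integrable_exp_mul_abs_sub_sq_div_two (2 * c)).congr
    (.of_forall fun x ↦ ?_)
  dsimp only
  rw [← Real.exp_nat_mul, ← Real.exp_sum, Finset.sum_sub_distrib, ← Finset.mul_sum,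
    ← Finset.sum_div]
  push_cast
  congr 1
  ring

theorem integrable_exp_mul_norm_dotProductCLM_mul_gaussian {f : (ι → ℝ) → ℂ}
    (hf : MemLp f 2) (R : ℝ) :
    Integrable fun x : ι → ℝ ↦
      Real.exp (R * ‖dotProductCLM x‖) * ‖cexp (-(∑ j, (x j : ℂ) ^ 2) / 4) * f x‖ := by
  have hgauss_cont : Continuous fun x : ι → ℝ ↦ cexp (-(∑ j, (x j : ℂ) ^ 2) / 4) := by fun_prop
  have hweight_cont : Continuous fun x : ι → ℝ ↦ Real.exp (R * ‖dotProductCLM x‖) := by fun_prop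
  refine ((memLp_two_exp_mul_sum_abs_sub_sum_sq |R|).integrable_mul hf.norm).mono'
    (hweight_cont.aestronglyMeasurable.mul (hgauss_cont.aestronglyMeasurable.mul hf.1).norm)
    (.of_forall fun x ↦ ?_)
  have hgauss : ‖cexp (-(∑ j, (x j : ℂ) ^ 2) / 4)‖ = Real.exp (-(∑ j, x j ^ 2) / 4) := by
    rw [← Complex.norm_exp_ofReal]
    push_cast
    rfl
  rw [norm_mul, norm_norm, norm_mul, hgauss, Real.norm_of_nonneg (by positivity), Pi.mul_apply,
    ← mul_assoc, ← Real.exp_add, sub_eq_add_neg, neg_div]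
  gcongr
  · exact le_abs_self R
  · exact norm_dotProductCLM_le x

end Coordinates

/-- For `f ∈ L²(ℝ^m)`, the Segal–Bargmann transform `B[f] : ℂ^m → ℂ` is an entire function,
i.e. it is complex differentiable at every point of `ℂ^m`. -/
theorem segalBargmannM_entire (m : ℕ) (f : (Fin m → ℝ) → ℂ) (hf : MemLp f 2 volume) :
    Differentiable ℂ (segalBargmannM m f) := by
  have hkernel : segalBargmannM m f = fun z ↦
      ((Real.sqrt (2 * Real.pi) ^ m : ℝ) : ℂ)⁻¹ * cexp (-(∑ j, z j ^ 2) / 2) *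
        ∫ x, cexp (dotProductCLM x z) * (cexp (-(∑ j, (x j : ℂ) ^ 2) / 4) * f x) := by
    ext z
    rw [segalBargmannM, mul_assoc]
    congr 1
    rw [← integral_const_mul]
    congr 1 with x
    rw [dotProductCLM_apply, sub_eq_add_neg, Complex.exp_add, Complex.exp_add, ← neg_div]
    ring
  have hgauss_cont : Continuous fun x : Fin m → ℝ ↦ cexp (-(∑ j, (x j : ℂ) ^ 2) / 4) := by
    fun_prop
  rw [hkernel]
  exact ((differentiable_const _).mul (by fun_prop)).mul <|
    differentiable_integral_cexp_apply_mul continuous_dotProductCLM.aestronglyMeasurable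
      (hgauss_cont.aestronglyMeasurable.mul hf.1)
      (integrable_exp_mul_norm_dotProductCLM_mul_gaussian hf)
end

section
/- Monogenic plane waves: let m ≥ 2, let t, s ∈ ℝ^m be orthonormal vectors (|t| = |s| = 1, ⟨t,s⟩ = 0), and let k ∈ ℕ. Then the Clifford-algebra-valued polynomial map f(x) = (⟨x,t⟩·1 − ι(t)ι(s)·⟨x,s⟩)^k is monogenic, i.e. Σ_{j=1}^m ι(ε_j) · (∂_j f)(x) = 0 for all x ∈ ℝ^m, where ε_j is the standard basis of ℝ^m, ⟨x,t⟩ = Σ_j x_j t_j, and ∂_j f denotes the j-th partial derivative of the polynomial map f. -/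
open CliffordAlgebra

/-- The quadratic form `Q(x) = -(x₁² + ⋯ + x_m²)` on `ℝ^m`, whose Clifford algebra is
the real Clifford algebra `Cl_m` with generators `e_j = ι(ε_j)` satisfying
`e_j e_k + e_k e_j = -2 δ_{jk}`. -/
noncomputable def negEuclidQ (m : ℕ) : QuadraticForm ℝ (Fin m → ℝ) :=
  QuadraticMap.weightedSumSquares ℝ (fun _ : Fin m => (-1 : ℝ))

/-- The monogenic plane wave `x ↦ (⟨x,t⟩·1 - ι(t)ι(s)·⟨x,s⟩)^k` with values in `Cl_m`. -/
noncomputable def planeWave (m k : ℕ) (t s : Fin m → ℝ) :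
    (Fin m → ℝ) → CliffordAlgebra (negEuclidQ m) :=
  fun x => ((∑ j, x j * t j) • (1 : CliffordAlgebra (negEuclidQ m))
      - (∑ j, x j * s j) • (ι (negEuclidQ m) t * ι (negEuclidQ m) s)) ^ k

/-! The map `L x = ⟨x,t⟩ - ι(t)ι(s)⟨x,s⟩` is linear and takes values in the commutative subalgebra
spanned by `1` and `ι(t)ι(s)`, so `∂_j (L x)^k = k L(ε_j) (L x)^(k-1)`. The Dirac operator therefore
maps `f` to `k (∑_j ι(ε_j) L(ε_j)) (L x)^(k-1)`, and `∑_j ι(ε_j) L(ε_j) = ι(t) - ι(s)ι(t)ι(s)`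
vanishes because `ι(s)ι(t)ι(s) = -Q(s) ι(t) = ι(t)` when `s ⊥ t` and `Q(s) = -1`. -/

theorem hasDerivAt_map_add_smul_pow {𝕜 A F : Type*} [NontriviallyNormedField 𝕜] [Ring A]
    [Algebra 𝕜 A] [NormedAddCommGroup F] [NormedSpace 𝕜 F] {a b : A} (hab : Commute a b)
    (φ : A →ₗ[𝕜] F) (k : ℕ) (u : 𝕜) :
    HasDerivAt (fun v : 𝕜 => φ ((a + v • b) ^ k)) (φ (k • (b * (a + u • b) ^ (k - 1)))) u := by
  induction k generalizing φ with
  | zero => simpa using hasDerivAt_const u (φ 1)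
  | succ k ih =>
    set c := a + u • b
    have hsplit : (fun v : 𝕜 => φ ((a + v • b) ^ (k + 1))) = fun v =>
        (φ ∘ₗ LinearMap.mulRight 𝕜 a) ((a + v • b) ^ k)
          + v • (φ ∘ₗ LinearMap.mulRight 𝕜 b) ((a + v • b) ^ k) := by
      ext v
      simp [pow_succ, mul_add]
    have hpow : k • (b * c ^ (k - 1)) * c = k • (b * c ^ k) := by
      rcases k with _ | k
      · simp
      · rw [Nat.add_sub_cancel, smul_mul_assoc, mul_assoc, ← pow_succ]
    have hbc : Commute b c := hab.symm.add_right ((Commute.refl b).smul_right u)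
    rw [hsplit]
    refine ((ih _).add ((hasDerivAt_id' u).smul (ih _))).congr_deriv ?_
    simp only [LinearMap.comp_apply, LinearMap.mulRight_apply, one_smul, ← map_smul, ← map_add]
    congr 1
    calc k • (b * c ^ (k - 1)) * a + (u • (k • (b * c ^ (k - 1)) * b) + c ^ k * b)
        = k • (b * c ^ (k - 1)) * c + c ^ k * b := by rw [mul_add, mul_smul_comm, add_assoc]
      _ = (k + 1) • (b * c ^ (k + 1 - 1)) := by
        rw [hpow, ← (hbc.pow_right k).eq, Nat.add_sub_cancel, succ_nsmul]

theorem hasDerivAt_map_update_pow {𝕜 ι A F : Type*} [NontriviallyNormedField 𝕜] [DecidableEq ι]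
    [Ring A] [Algebra 𝕜 A] [NormedAddCommGroup F] [NormedSpace 𝕜 F] (L : (ι → 𝕜) →ₗ[𝕜] A)
    (hL : ∀ x y, Commute (L x) (L y)) (φ : A →ₗ[𝕜] F) (k : ℕ) (x : ι → 𝕜) (j : ι) :
    HasDerivAt (fun u : 𝕜 => φ (L (Function.update x j u) ^ k))
      (φ (k • (L (Pi.single j 1) * L x ^ (k - 1)))) (x j) := by
  have hupd (u : 𝕜) : Function.update x j u = Function.update x j 0 + u • Pi.single j 1 := by
    ext i
    rcases eq_or_ne i j with rfl | h
    · simp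
    · simp [h]
  have hx : L (Function.update x j 0) + x j • L (Pi.single j 1) = L x := by
    rw [← map_smul, ← map_add, ← hupd, Function.update_eq_self]
  have hfun : (fun u : 𝕜 => φ (L (Function.update x j u) ^ k))
      = fun u => φ ((L (Function.update x j 0) + u • L (Pi.single j 1)) ^ k) := by
    ext u
    rw [hupd, map_add, map_smul]
  rw [hfun]
  simpa only [hx] using
    hasDerivAt_map_add_smul_pow (hL (Function.update x j 0) (Pi.single j 1)) φ k (x j)

theorem sum_smul_ι_single {R n : Type*} [CommRing R] [Fintype n] [DecidableEq n]
    (Q : QuadraticForm R (n → R)) (w : n → R) :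
    ∑ j, w j • ι Q (Pi.single j 1) = ι Q w := by
  simp_rw [← map_smul, ← map_sum, ← pi_eq_sum_univ' w]

theorem negEuclidQ_apply (m : ℕ) (v : Fin m → ℝ) : negEuclidQ m v = -∑ j, v j ^ 2 := by
  simp [negEuclidQ, QuadraticMap.weightedSumSquares_apply, sq]

theorem polar_negEuclidQ (m : ℕ) (v w : Fin m → ℝ) :
    QuadraticMap.polar (negEuclidQ m) v w = -2 * ∑ j, v j * w j := by
  simp only [QuadraticMap.polar, negEuclidQ_apply, Pi.add_apply, Finset.mul_sum,
    ← Finset.sum_neg_distrib, ← Finset.sum_sub_distrib]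
  exact Finset.sum_congr rfl fun j _ => by ring

noncomputable def planeWaveLinear (m : ℕ) (t s : Fin m → ℝ) :
    (Fin m → ℝ) →ₗ[ℝ] CliffordAlgebra (negEuclidQ m) where
  toFun x := (∑ j, x j * t j) • 1 - (∑ j, x j * s j) • (ι (negEuclidQ m) t * ι (negEuclidQ m) s)
  map_add' x y := by
    simp only [Pi.add_apply, add_mul, Finset.sum_add_distrib]
    module
  map_smul' c x := by
    simp only [Pi.smul_apply, smul_eq_mul, mul_assoc, ← Finset.mul_sum, RingHom.id_apply]
    module

theorem planeWave_eq_pow (m k : ℕ) (t s x : Fin m → ℝ) :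
    planeWave m k t s x = planeWaveLinear m t s x ^ k :=
  rfl

theorem planeWaveLinear_commute (m : ℕ) (t s x y : Fin m → ℝ) :
    Commute (planeWaveLinear m t s x) (planeWaveLinear m t s y) := by
  simp only [Commute, SemiconjBy, planeWaveLinear, LinearMap.coe_mk, AddHom.coe_mk, sub_mul,
    mul_sub, smul_mul_assoc, mul_smul_comm, one_mul, mul_one]
  module

theorem planeWaveLinear_single (m : ℕ) (t s : Fin m → ℝ) (j : Fin m) :
    planeWaveLinear m t s (Pi.single j 1)
      = t j • 1 - s j • (ι (negEuclidQ m) t * ι (negEuclidQ m) s) := by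
  simp [planeWaveLinear, Pi.single_apply]

theorem sum_ι_single_mul_planeWaveLinear_single (m : ℕ) (t s : Fin m → ℝ)
    (hs : ∑ j, s j ^ 2 = 1) (hts : ∑ j, t j * s j = 0) :
    ∑ j, ι (negEuclidQ m) (Pi.single j 1) * planeWaveLinear m t s (Pi.single j 1) = 0 := by
  have hQs : negEuclidQ m s = -1 := by rw [negEuclidQ_apply, hs]
  have hpolar : QuadraticMap.polar (negEuclidQ m) s t = 0 := by
    rw [QuadraticMap.polar_comm, polar_negEuclidQ, hts, mul_zero]
  simp_rw [planeWaveLinear_single, mul_sub, mul_smul_comm, mul_one, ← smul_mul_assoc,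
    Finset.sum_sub_distrib, ← Finset.sum_mul, sum_smul_ι_single, ← mul_assoc, ι_mul_ι_mul_ι,
    hpolar, hQs, zero_smul, zero_sub, neg_one_smul, neg_neg, sub_self]

theorem planeWave_monogenic_general (m : ℕ) (t s : Fin m → ℝ)
    (hs : ∑ j, s j ^ 2 = 1) (hts : ∑ j, t j * s j = 0) (k : ℕ) :
    ∃ g : Fin m → (Fin m → ℝ) → CliffordAlgebra (negEuclidQ m),
      (∀ (j : Fin m) (x : Fin m → ℝ) (φ : CliffordAlgebra (negEuclidQ m) →ₗ[ℝ] ℝ),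
        deriv (fun u : ℝ => φ (planeWave m k t s (Function.update x j u))) (x j)
          = φ (g j x)) ∧
      ∀ x : Fin m → ℝ,
        ∑ j, ι (negEuclidQ m) (Pi.single j 1) * g j x = 0 := by
  set L := planeWaveLinear m t s
  refine ⟨fun j x => k • (L (Pi.single j 1) * L x ^ (k - 1)), fun j x φ => ?_, fun x => ?_⟩
  · simp_rw [planeWave_eq_pow]
    exact (hasDerivAt_map_update_pow L (planeWaveLinear_commute m t s) φ k x j).deriv
  · calc ∑ j, ι (negEuclidQ m) (Pi.single j 1) * k • (L (Pi.single j 1) * L x ^ (k - 1))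
        = k • ((∑ j, ι (negEuclidQ m) (Pi.single j 1) * L (Pi.single j 1)) * L x ^ (k - 1)) := by
          simp only [Finset.sum_mul, Finset.smul_sum, mul_smul_comm, mul_assoc]
      _ = 0 := by rw [sum_ι_single_mul_planeWaveLinear_single m t s hs hts, zero_mul, smul_zero]

/-- Monogenic plane waves: for orthonormal vectors `t, s ∈ ℝ^m` the Clifford-algebra-valued
polynomial map `f(x) = (⟨x,t⟩·1 - ι(t)ι(s)·⟨x,s⟩)^k` is (left) monogenic.  The partial
derivatives `g j = ∂_j f` are characterized through all `ℝ`-linear functionals `φ` on `Cl_m`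
(which separate points), and the Dirac operator `∑_j ι(ε_j) ∂_j` annihilates `f`. -/
theorem planeWave_monogenic (m : ℕ) (hm : 2 ≤ m) (t s : Fin m → ℝ)
    (ht : ∑ j, t j ^ 2 = 1) (hs : ∑ j, s j ^ 2 = 1) (hts : ∑ j, t j * s j = 0) (k : ℕ) :
    ∃ g : Fin m → (Fin m → ℝ) → CliffordAlgebra (negEuclidQ m),
      (∀ (j : Fin m) (x : Fin m → ℝ) (φ : CliffordAlgebra (negEuclidQ m) →ₗ[ℝ] ℝ),
        deriv (fun u : ℝ => φ (planeWave m k t s (Function.update x j u))) (x j)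
          = φ (g j x)) ∧
      ∀ x : Fin m → ℝ,
        ∑ j, ι (negEuclidQ m) (Pi.single j 1) * g j x = 0 :=
  planeWave_monogenic_general m t s hs hts k
end

section
/- (Complex-scalar form of Lemma 3.3, where the imaginary unit i plays the role of the bivector e₁e₂, which generates a subalgebra isomorphic to ℂ.) Let m ≥ 2 and k ∈ ℕ. For all z ∈ ℂ^m: (2π)^{-m/2} ∫_{ℝ^m} exp(−z·z/2 + x·z − x·x/4) · (x₁ − i x₂)^k e^{−|x|²/4} dx = (z₁ − i z₂)^k. -/
/-!
With `u = e₁ - i e₂` we have `x₁ - i x₂ = u·x` and `u·u = 0`, and the integrand is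
`e^{-z·z/2} (u·x)^k e^{x·z - x·x/2}`. Integrating by parts in each coordinate direction `e_j`
and summing with weights `u_j` gives
`∫ (u·x)^{k+1} E = (u·z) ∫ (u·x)^k E - k (u·u) ∫ (u·x)^{k-1} E` with `E = e^{x·z - x·x/2}`,
whose last term vanishes. So the integral is `(u·z)^k` times
`∫ e^{x·z - x·x/2} = (2π)^{m/2} e^{z·z/2}`, a product of one-dimensional complex Gaussian integrals.
-/

open MeasureTheory Complex Finset

lemma integrable_cexp_mul_sub_sq_div_two (w : ℂ) :
    Integrable fun t : ℝ ↦ cexp (t * w - t ^ 2 / 2) := by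
  convert integrable_cexp_quadratic (b := 1 / 2) (by norm_num) w 0 using 2 with t
  ring_nf

lemma integral_cexp_mul_sub_sq_div_two (w : ℂ) :
    ∫ t : ℝ, cexp (t * w - t ^ 2 / 2) = Real.sqrt (2 * Real.pi) * cexp (w ^ 2 / 2) := by
  have h := integral_cexp_quadratic (b := -1 / 2) (by norm_num) w 0
  have hsqrt : ((Real.sqrt (2 * Real.pi) : ℝ) : ℂ) = (Real.pi / -(-1 / 2) : ℂ) ^ (1 / 2 : ℂ) := by
    rw [Real.sqrt_eq_rpow, Complex.ofReal_cpow (by positivity)]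
    push_cast
    congr 1; ring
  rw [hsqrt]
  convert h using 3 with t <;> ring_nf

lemma hasDerivAt_cexp_mul_sub_sq_div_two_zero (a : ℂ) :
    HasDerivAt (fun t : ℝ ↦ cexp (t * a - t ^ 2 / 2)) a 0 := by
  have h := ((hasDerivAt_id ((0 : ℝ) : ℂ)).mul_const a).sub
    ((hasDerivAt_pow 2 ((0 : ℝ) : ℂ)).div_const 2) |>.comp_ofReal |>.cexp
  simpa using h

lemma abs_le_exp_add_exp_neg (t : ℝ) : |t| ≤ Real.exp t + Real.exp (-t) := by
  rcases abs_cases t with ⟨h, -⟩ | ⟨h, -⟩ <;> rw [h]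
  · linarith [Real.add_one_le_exp t, Real.exp_pos (-t)]
  · linarith [Real.add_one_le_exp (-t), Real.exp_pos t]

variable {ι : Type*} [Fintype ι]

noncomputable def gaussianWeight (w : ι → ℂ) (x : ι → ℝ) : ℂ :=
  cexp (∑ j, ((x j : ℂ) * w j - (x j : ℂ) ^ 2 / 2))

lemma gaussianWeight_eq_prod (w : ι → ℂ) (x : ι → ℝ) :
    gaussianWeight w x = ∏ j, cexp ((x j : ℂ) * w j - (x j : ℂ) ^ 2 / 2) :=
  Complex.exp_sum _ _

lemma integrable_gaussianWeight (w : ι → ℂ) : Integrable (gaussianWeight w) := by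
  simp_rw [funext (gaussianWeight_eq_prod w)]
  exact Integrable.fintype_prod fun j ↦ integrable_cexp_mul_sub_sq_div_two (w j)

lemma integral_gaussianWeight (w : ι → ℂ) :
    ∫ x, gaussianWeight w x =
      (Real.sqrt (2 * Real.pi) : ℂ) ^ Fintype.card ι * cexp ((∑ j, w j ^ 2) / 2) := by
  simp_rw [gaussianWeight_eq_prod]
  rw [integral_fintype_prod_volume_eq_prod (fun j (t : ℝ) ↦ cexp (t * w j - t ^ 2 / 2))]
  simp_rw [integral_cexp_mul_sub_sq_div_two, prod_mul_distrib, prod_const, card_univ,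
    ← Complex.exp_sum, sum_div]

lemma gaussianWeight_add_single [DecidableEq ι] (w : ι → ℂ) (j : ι) (c : ℂ) (x : ι → ℝ) :
    gaussianWeight (w + Pi.single j c) x = cexp (x j * c) * gaussianWeight w x := by
  simp only [gaussianWeight, ← Complex.exp_add, Pi.add_apply, mul_add, Pi.single_apply]
  congr 1
  simp only [mul_ite, mul_zero, add_sub_right_comm, sum_add_distrib, sum_sub_distrib, sum_ite_eq',
    mem_univ, ↓reduceIte]
  ring

lemma integrable_coord_mul_of_forall_integrable_mul_gaussianWeight {f : (ι → ℝ) → ℂ}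
    (hf : ∀ w, Integrable fun x ↦ f x * gaussianWeight w x) (j : ι) (w : ι → ℂ) :
    Integrable fun x ↦ (x j : ℂ) * f x * gaussianWeight w x := by
  classical
  -- `|x_j| ≤ e^{x_j} + e^{-x_j}`, and `e^{±x_j}` is absorbed by shifting `w` to `w ± e_j`.
  have hbound := ((hf (w + Pi.single j 1)).norm.add (hf (w + Pi.single j (-1))).norm)
  refine hbound.mono' ((continuous_ofReal.comp (continuous_apply j)).aestronglyMeasurable.mul
    (hf w).aestronglyMeasurable |>.congr (.of_forall fun x ↦ by simp [mul_assoc])) ?_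
  refine .of_forall fun x ↦ ?_
  simp only [Pi.add_apply, gaussianWeight_add_single, norm_mul, Complex.norm_exp, mul_one,
    mul_neg_one, neg_re, ofReal_re, Complex.norm_real, Real.norm_eq_abs]
  linear_combination mul_le_mul_of_nonneg_right (abs_le_exp_add_exp_neg (x j))
    (mul_nonneg (norm_nonneg (f x)) (norm_nonneg (gaussianWeight w x)))

noncomputable def pairing (u : ι → ℂ) (x : ι → ℝ) : ℂ := ∑ j, u j * x j

lemma integrable_pairing_pow_mul_gaussianWeight (u : ι → ℂ) (k : ℕ) (w : ι → ℂ) :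
    Integrable fun x ↦ pairing u x ^ k * gaussianWeight w x := by
  induction k generalizing w with
  | zero => simpa using integrable_gaussianWeight w
  | succ k ih =>
    have h := integrable_finsetSum univ fun j _ ↦
      (integrable_coord_mul_of_forall_integrable_mul_gaussianWeight ih j w).const_mul (u j)
    refine h.congr (.of_forall fun x ↦ ?_)
    simp only [pairing, pow_succ, mul_sum, sum_mul]
    refine sum_congr rfl fun j _ ↦ ?_
    ring

lemma gaussianWeight_add_smul_single [DecidableEq ι] (w : ι → ℂ) (x : ι → ℝ) (j : ι) (t : ℝ) :
    gaussianWeight w (x + t • Pi.single j 1) =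
      cexp (t * (w j - x j) - t ^ 2 / 2) * gaussianWeight w x := by
  simp only [gaussianWeight, ← Complex.exp_add]
  congr 1
  rw [← sub_eq_iff_eq_add, ← sum_sub_distrib,
    Fintype.sum_eq_single j fun l hl ↦ by simp [hl]]
  simp only [Pi.add_apply, Pi.smul_apply, Pi.single_eq_same, smul_eq_mul, mul_one, ofReal_add]
  ring

lemma pairing_add_smul_single [DecidableEq ι] (u : ι → ℂ) (x : ι → ℝ) (j : ι) (t : ℝ) :
    pairing u (x + t • Pi.single j 1) = pairing u x + t * u j := by
  simp only [pairing, Pi.add_apply, Pi.smul_apply, smul_eq_mul, ofReal_add, ofReal_mul, mul_add,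
    sum_add_distrib, add_right_inj]
  rw [Fintype.sum_eq_single j fun l hl ↦ by simp [hl]]
  simp [mul_comm]

lemma hasLineDerivAt_gaussianWeight [DecidableEq ι] (w : ι → ℂ) (x : ι → ℝ) (j : ι) :
    HasLineDerivAt ℝ (gaussianWeight w) ((w j - x j) * gaussianWeight w x) x (Pi.single j 1) := by
  simp only [HasLineDerivAt, gaussianWeight_add_smul_single]
  exact (hasDerivAt_cexp_mul_sub_sq_div_two_zero _).mul_const _

lemma hasLineDerivAt_pairing_pow [DecidableEq ι] (u : ι → ℂ) (k : ℕ) (x : ι → ℝ) (j : ι) :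
    HasLineDerivAt ℝ (fun x ↦ pairing u x ^ k) (k * pairing u x ^ (k - 1) * u j) x
      (Pi.single j 1) := by
  simp only [HasLineDerivAt, pairing_add_smul_single]
  have h := ((hasDerivAt_id ((0 : ℝ) : ℂ)).mul_const (u j)).const_add (pairing u x)
    |>.comp_ofReal |>.fun_pow k
  simpa using h

lemma integrable_pairing_pow_mul_sub_coord_mul_gaussianWeight (u w : ι → ℂ) (k : ℕ) (j : ι) :
    Integrable fun x ↦ pairing u x ^ k * ((w j - x j) * gaussianWeight w x) := by
  have h := ((integrable_pairing_pow_mul_gaussianWeight u k w).const_mul (w j)).sub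
    (integrable_coord_mul_of_forall_integrable_mul_gaussianWeight
      (integrable_pairing_pow_mul_gaussianWeight u k) j w)
  refine h.congr (.of_forall fun x ↦ ?_)
  simp only [Pi.sub_apply]
  ring

lemma integral_pairing_pow_mul_sub_coord_mul_gaussianWeight (u w : ι → ℂ) (k : ℕ) (j : ι) :
    ∫ x, pairing u x ^ k * ((w j - x j) * gaussianWeight w x) =
      -(k * u j * ∫ x, pairing u x ^ (k - 1) * gaussianWeight w x) := by
  classical
  have h := integral_bilinear_hasLineDerivAt_right_eq_neg_left_of_integrable
    (B := ContinuousLinearMap.mul ℝ ℂ) (μ := volume)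
    (((integrable_pairing_pow_mul_gaussianWeight u (k - 1) w).const_mul (k * u j)).congr
      (.of_forall fun x ↦ by simp only [ContinuousLinearMap.mul_apply']; ring))
    (integrable_pairing_pow_mul_sub_coord_mul_gaussianWeight u w k j)
    (integrable_pairing_pow_mul_gaussianWeight u k w)
    (fun x _ ↦ hasLineDerivAt_pairing_pow u k x j) (fun x _ ↦ hasLineDerivAt_gaussianWeight w x j)
  simp only [ContinuousLinearMap.mul_apply'] at h
  rw [h, ← integral_const_mul]
  congr 2 with x
  ring

theorem integral_pairing_pow_succ_mul_gaussianWeight {u : ι → ℂ} (hu : ∑ j, u j ^ 2 = 0)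
    (w : ι → ℂ) (k : ℕ) :
    ∫ x, pairing u x ^ (k + 1) * gaussianWeight w x =
      (∑ j, u j * w j) * ∫ x, pairing u x ^ k * gaussianWeight w x := by
  have hvanish : ∑ j, u j * ∫ x, pairing u x ^ k * ((w j - x j) * gaussianWeight w x) = 0 := by
    simp_rw [integral_pairing_pow_mul_sub_coord_mul_gaussianWeight]
    calc _ = -(k * ∫ x, pairing u x ^ (k - 1) * gaussianWeight w x) * ∑ j, u j ^ 2 := by
          rw [mul_sum]; exact sum_congr rfl fun j _ ↦ by ring
      _ = 0 := by rw [hu, mul_zero]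
  have hpointwise (x : ι → ℝ) :
      ∑ j, u j * (pairing u x ^ k * ((w j - x j) * gaussianWeight w x)) =
        (∑ j, u j * w j) * (pairing u x ^ k * gaussianWeight w x) -
          pairing u x ^ (k + 1) * gaussianWeight w x := by
    calc _ = (∑ j, (u j * w j - u j * x j)) * (pairing u x ^ k * gaussianWeight w x) := by
          rw [sum_mul]; exact sum_congr rfl fun j _ ↦ by ring
      _ = _ := by rw [sum_sub_distrib, pow_succ]; unfold pairing; ring
  simp_rw [← integral_const_mul] at hvanish
  rw [← integral_finsetSum _ fun j _ ↦
    (integrable_pairing_pow_mul_sub_coord_mul_gaussianWeight u w k j).const_mul (u j)] at hvanish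
  simp_rw [hpointwise] at hvanish
  rw [integral_sub ((integrable_pairing_pow_mul_gaussianWeight u k w).const_mul _)
    (integrable_pairing_pow_mul_gaussianWeight u (k + 1) w), integral_const_mul] at hvanish
  exact (sub_eq_zero.mp hvanish).symm

theorem integral_pairing_pow_mul_gaussianWeight {u : ι → ℂ} (hu : ∑ j, u j ^ 2 = 0)
    (w : ι → ℂ) (k : ℕ) :
    ∫ x, pairing u x ^ k * gaussianWeight w x =
      (∑ j, u j * w j) ^ k *
        ((Real.sqrt (2 * Real.pi) : ℂ) ^ Fintype.card ι * cexp ((∑ j, w j ^ 2) / 2)) := by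
  induction k with
  | zero => simp [integral_gaussianWeight]
  | succ k ih => rw [integral_pairing_pow_succ_mul_gaussianWeight hu, ih, pow_succ]; ring

lemma cexp_segalBargmann_kernel_mul (z : ι → ℂ) (x : ι → ℝ) :
    cexp (-(∑ j, z j ^ 2) / 2 + (∑ j, (x j : ℂ) * z j) - (∑ j, (x j : ℂ) ^ 2) / 4) *
        (Real.exp (-(∑ j, x j ^ 2) / 4) : ℂ) =
      cexp (-(∑ j, z j ^ 2) / 2) * gaussianWeight z x := by
  rw [gaussianWeight, ofReal_exp, ← Complex.exp_add, ← Complex.exp_add]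
  push_cast
  rw [sum_sub_distrib, ← sum_div]
  ring_nf

lemma sum_single_add_single_neg_I_mul [DecidableEq ι] (i₀ i₁ : ι) (y : ι → ℂ) :
    ∑ j, (Pi.single i₀ 1 + Pi.single i₁ (-I) : ι → ℂ) j * y j = y i₀ - I * y i₁ := by
  simp [add_mul, sum_add_distrib, Pi.single_apply, sub_eq_add_neg]

/-- Complex-scalar form of Lemma 3.3: the Segal–Bargmann transform of
`(x₁ - i x₂)^k e^{-|x|²/4}` is `(z₁ - i z₂)^k`. -/
theorem segalBargmann_complex_power (m : ℕ) (hm : 2 ≤ m) (k : ℕ) (z : Fin m → ℂ) :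
    ((Real.sqrt (2 * Real.pi) ^ m : ℝ) : ℂ)⁻¹ *
      ∫ x : Fin m → ℝ,
        Complex.exp (-(∑ j, z j ^ 2) / 2 + (∑ j, (x j : ℂ) * z j) - (∑ j, (x j : ℂ) ^ 2) / 4)
          * ((x ⟨0, by omega⟩ : ℂ) - Complex.I * (x ⟨1, by omega⟩ : ℂ)) ^ k
          * (Real.exp (-(∑ j, x j ^ 2) / 4) : ℂ)
    = (z ⟨0, by omega⟩ - Complex.I * z ⟨1, by omega⟩) ^ k := by
  set u : Fin m → ℂ := Pi.single ⟨0, by omega⟩ 1 + Pi.single ⟨1, by omega⟩ (-I)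
  have hne : (⟨0, by omega⟩ : Fin m) ≠ ⟨1, by omega⟩ := by simp
  have hu : ∑ j, u j ^ 2 = 0 := by
    simp_rw [sq]
    rw [sum_single_add_single_neg_I_mul]
    simp [u, hne, hne.symm]
  have hx (x : Fin m → ℝ) : pairing u x = x ⟨0, by omega⟩ - I * x ⟨1, by omega⟩ :=
    sum_single_add_single_neg_I_mul _ _ _
  calc _ = ((Real.sqrt (2 * Real.pi) ^ m : ℝ) : ℂ)⁻¹ * (cexp (-(∑ j, z j ^ 2) / 2) *
        ∫ x, pairing u x ^ k * gaussianWeight z x) := by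
        congr 1
        rw [← integral_const_mul]
        refine integral_congr_ae (.of_forall fun x ↦ ?_)
        dsimp only
        rw [hx, mul_right_comm, cexp_segalBargmann_kernel_mul]
        ring
    _ = _ := by
        rw [integral_pairing_pow_mul_gaussianWeight hu, sum_single_add_single_neg_I_mul _ _,
          Fintype.card_fin, neg_div, Complex.exp_neg]
        have hsqrt : (Real.sqrt (2 * Real.pi) : ℂ) ≠ 0 := ofReal_ne_zero.mpr (by positivity)
        push_cast
        field_simp
end

section
/- (Complex-scalar plane-wave form of Theorem 3.5 with s = 0, where i plays the role of the commuting bivector ι(t)ι(s).) Let m ≥ 2, let t, s ∈ ℝ^m be orthonormal vectors (|t| = |s| = 1, ⟨t,s⟩ = 0), and let k ∈ ℕ. Then for all z ∈ ℂ^m: (2π)^{-m/2} ∫_{ℝ^m} exp(−z·z/2 + x·z − x·x/4) · (⟨x,t⟩ − i⟨x,s⟩)^k e^{−|x|²/4} dx = (⟨z,t⟩ − i⟨z,s⟩)^k, where ⟨x,t⟩ = Σ_j x_j t_j and ⟨z,t⟩ = Σ_j z_j t_j. -/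
/-!
Put `v = t - i s`, so that `v·v = |t|² - |s|² - 2i⟨t,s⟩ = 0`. Multiplying out the two Gaussians,
the claim becomes `∫ exp(x·c - x·x/2) (x·v)ᵏ dx = (2π)^{m/2} exp(c·c/2) (c·v)ᵏ` at `c = z`. For
`k = 0` this is the Gaussian integral. For the inductive step replace `c` by `c + λv`: because
`v·v = 0` the right-hand side becomes `(2π)^{m/2} exp(c·c/2 + λ c·v) (c·v)ᵏ`, and differentiating
both sides at `λ = 0` (under the integral sign, with a Gaussian majorant) multiplies the integrand
by `x·v` and the right-hand side by `c·v`.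
-/

open MeasureTheory Complex Finset
open scoped Nat

namespace SegalBargmann

variable {ι : Type*} [Fintype ι]

lemma norm_sum_ofReal_mul_le (x : ι → ℝ) (w : ι → ℂ) :
    ‖∑ i, (x i : ℂ) * w i‖ ≤ ∑ i, |x i| * ‖w i‖ :=
  (norm_sum_le _ _).trans_eq <| by simp only [norm_mul, norm_real, Real.norm_eq_abs]

lemma mul_abs_sub_sq_div_four_le (a u : ℝ) : a * |u| - u ^ 2 / 4 ≤ a ^ 2 := by
  nlinarith [sq_nonneg (|u| / 2 - a), sq_abs u]

lemma integrable_exp_neg_sum_sq_div_four :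
    Integrable fun x : ι → ℝ => Real.exp (-(∑ i, x i ^ 2) / 4) := by
  have h := Integrable.fintype_prod (ι := ι) (μ := fun _ => volume)
    (f := fun _ u => Real.exp (-(1 / 4) * u ^ 2)) fun _ => integrable_exp_neg_mul_sq (by norm_num)
  refine h.congr (.of_forall fun x => ?_)
  simp only [← Real.exp_sum, ← Finset.mul_sum]
  ring_nf

noncomputable def gaussianPlaneWave (c v : ι → ℂ) (n : ℕ) (x : ι → ℝ) : ℂ :=
  cexp (∑ i, (x i : ℂ) * c i - (∑ i, (x i : ℂ) ^ 2) / 2) * (∑ i, (x i : ℂ) * v i) ^ n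

lemma continuous_gaussianPlaneWave (c v : ι → ℂ) (n : ℕ) :
    Continuous (gaussianPlaneWave c v n) := by
  unfold gaussianPlaneWave; fun_prop

lemma norm_gaussianPlaneWave_le {c v : ι → ℂ} {A : ι → ℝ} (hA : ∀ i, ‖c i‖ + ‖v i‖ ≤ A i)
    (n : ℕ) (x : ι → ℝ) :
    ‖gaussianPlaneWave c v n x‖
      ≤ n ! * Real.exp (∑ i, A i ^ 2) * Real.exp (-(∑ i, x i ^ 2) / 4) := by
  set P := ∑ i, (x i : ℂ) * v i
  -- `‖P‖ⁿ ≤ n! e^‖P‖`; completing the square in each coordinate then absorbs every linear term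
  -- into half of the Gaussian.
  have hpow : ‖P‖ ^ n ≤ n ! * Real.exp ‖P‖ := by
    have := Real.pow_div_factorial_le_exp ‖P‖ (norm_nonneg P) n
    rwa [div_le_iff₀ (by positivity), mul_comm] at this
  have hre : (∑ i, (x i : ℂ) * c i - (∑ i, (x i : ℂ) ^ 2) / 2).re + ‖P‖
      ≤ ∑ i, A i ^ 2 + -(∑ i, x i ^ 2) / 4 := by
    have hsq : (∑ i, (x i : ℂ) ^ 2) / 2 = (((∑ i, x i ^ 2) / 2 : ℝ) : ℂ) := by push_cast; rfl
    have hlin : (∑ i, (x i : ℂ) * c i).re + ‖P‖ ≤ ∑ i, A i * |x i| :=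
      calc (∑ i, (x i : ℂ) * c i).re + ‖P‖
          ≤ ∑ i, |x i| * ‖c i‖ + ∑ i, |x i| * ‖v i‖ :=
            add_le_add ((re_le_norm _).trans (norm_sum_ofReal_mul_le x c))
              (norm_sum_ofReal_mul_le x v)
        _ ≤ ∑ i, A i * |x i| := by
            rw [← Finset.sum_add_distrib]
            gcongr with i
            nlinarith [hA i, abs_nonneg (x i)]
    have hquad : ∑ i, A i * |x i| - (∑ i, x i ^ 2) / 4 ≤ ∑ i, A i ^ 2 := by
      rw [Finset.sum_div, ← Finset.sum_sub_distrib]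
      exact Finset.sum_le_sum fun i _ => mul_abs_sub_sq_div_four_le (A i) (x i)
    have hnonneg : 0 ≤ ∑ i, x i ^ 2 := Finset.sum_nonneg fun i _ => sq_nonneg (x i)
    rw [sub_re, hsq, ofReal_re]
    linarith
  calc ‖gaussianPlaneWave c v n x‖
      = Real.exp (∑ i, (x i : ℂ) * c i - (∑ i, (x i : ℂ) ^ 2) / 2).re * ‖P‖ ^ n := by
        rw [gaussianPlaneWave, norm_mul, norm_exp, norm_pow]
    _ ≤ Real.exp (∑ i, (x i : ℂ) * c i - (∑ i, (x i : ℂ) ^ 2) / 2).re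
          * (n ! * Real.exp ‖P‖) := by gcongr
    _ = n ! * Real.exp ((∑ i, (x i : ℂ) * c i - (∑ i, (x i : ℂ) ^ 2) / 2).re + ‖P‖) := by
        rw [Real.exp_add]; ring
    _ ≤ n ! * Real.exp (∑ i, A i ^ 2 + -(∑ i, x i ^ 2) / 4) := by gcongr
    _ = n ! * Real.exp (∑ i, A i ^ 2) * Real.exp (-(∑ i, x i ^ 2) / 4) := by
        rw [Real.exp_add, mul_assoc]

lemma integrable_gaussianPlaneWave (c v : ι → ℂ) (n : ℕ) :
    Integrable (gaussianPlaneWave c v n) :=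
  (integrable_exp_neg_sum_sq_div_four.const_mul _).mono'
    (continuous_gaussianPlaneWave c v n).aestronglyMeasurable
    (.of_forall (norm_gaussianPlaneWave_le (fun _ => le_rfl) n))

lemma hasDerivAt_gaussianPlaneWave (c v : ι → ℂ) (n : ℕ) (x : ι → ℝ) (l : ℝ) :
    HasDerivAt (fun l : ℝ => gaussianPlaneWave (c + (l : ℂ) • v) v n x)
      (gaussianPlaneWave (c + (l : ℂ) • v) v (n + 1) x) l := by
  set P := ∑ i, (x i : ℂ) * v i
  have hexp : ∀ l : ℝ, ∑ i, (x i : ℂ) * (c + (l : ℂ) • v) i - (∑ i, (x i : ℂ) ^ 2) / 2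
      = (∑ i, (x i : ℂ) * c i - (∑ i, (x i : ℂ) ^ 2) / 2) + l * P := by
    intro l
    have hpair : ∑ i, (x i : ℂ) * (c + (l : ℂ) • v) i = ∑ i, (x i : ℂ) * c i + l * P := by
      simp only [Pi.add_apply, Pi.smul_apply, smul_eq_mul, P, Finset.mul_sum,
        ← Finset.sum_add_distrib]
      exact Finset.sum_congr rfl fun i _ => by ring
    rw [hpair]; ring
  have hfun : (fun l : ℝ => gaussianPlaneWave (c + (l : ℂ) • v) v n x)
      = fun l : ℝ => cexp ((∑ i, (x i : ℂ) * c i - (∑ i, (x i : ℂ) ^ 2) / 2) + l * P) * P ^ n :=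
    funext fun l => by rw [gaussianPlaneWave, hexp]
  have hofReal : HasDerivAt (fun l : ℝ => (l : ℂ)) 1 l := ofRealCLM.hasDerivAt
  rw [hfun, gaussianPlaneWave, hexp]
  exact (((hofReal.mul_const P).const_add _).cexp.mul_const (P ^ n)).congr_deriv (by ring)

lemma hasDerivAt_integral_gaussianPlaneWave (c v : ι → ℂ) (n : ℕ) :
    HasDerivAt (fun l : ℝ => ∫ x, gaussianPlaneWave (c + (l : ℂ) • v) v n x)
      (∫ x, gaussianPlaneWave c v (n + 1) x) 0 := by
  have hbound : ∀ l ∈ Metric.ball (0 : ℝ) 1, ∀ i,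
      ‖(c + (l : ℂ) • v) i‖ + ‖v i‖ ≤ ‖c i‖ + 2 * ‖v i‖ := by
    intro l hl i
    have hl : |l| ≤ 1 := (mem_ball_zero_iff.1 hl).le
    have : ‖(l : ℂ) * v i‖ ≤ ‖v i‖ := by
      rw [norm_mul, norm_real, Real.norm_eq_abs]
      exact mul_le_of_le_one_left (norm_nonneg _) hl
    simp only [Pi.add_apply, Pi.smul_apply, smul_eq_mul]
    linarith [norm_add_le (c i) ((l : ℂ) * v i)]
  have h := hasDerivAt_integral_of_dominated_loc_of_deriv_le (x₀ := 0)
    (Metric.ball_mem_nhds 0 one_pos)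
    (.of_forall fun l => (continuous_gaussianPlaneWave _ v n).aestronglyMeasurable)
    (integrable_gaussianPlaneWave _ v n)
    (continuous_gaussianPlaneWave _ v (n + 1)).aestronglyMeasurable
    (.of_forall fun x l hl => norm_gaussianPlaneWave_le (hbound l hl) (n + 1) x)
    (integrable_exp_neg_sum_sq_div_four.const_mul _)
    (.of_forall fun x l _ => hasDerivAt_gaussianPlaneWave c v n x l)
  simpa using h.2

lemma integral_gaussianPlaneWave_zero (c v : ι → ℂ) :
    ∫ x, gaussianPlaneWave c v 0 x
      = (Real.sqrt (2 * Real.pi) : ℂ) ^ Fintype.card ι * cexp ((∑ i, c i ^ 2) / 2) := by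
  have hint : gaussianPlaneWave c v 0
      = fun x => cexp (-(1 / 2) * ∑ i, (x i : ℂ) ^ 2 + ∑ i, c i * x i) := by
    funext x
    rw [gaussianPlaneWave, pow_zero, mul_one]
    simp only [mul_comm (c _)]
    ring_nf
  have hconst : ((Real.pi : ℂ) / (1 / 2)) ^ ((Fintype.card ι : ℂ) / 2)
      = (Real.sqrt (2 * Real.pi) : ℂ) ^ Fintype.card ι := by
    rw [div_eq_mul_one_div (Fintype.card ι : ℂ), cpow_nat_mul, Real.sqrt_eq_rpow,
      ofReal_cpow (by positivity)]
    push_cast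
    ring_nf
  rw [hint, GaussianFourier.integral_cexp_neg_mul_sum_add (by norm_num), hconst]
  ring_nf

lemma sum_add_smul_mul_of_sum_sq_eq_zero {v : ι → ℂ} (hv : ∑ i, v i ^ 2 = 0)
    (c : ι → ℂ) (a : ℂ) :
    ∑ i, (c + a • v) i * v i = ∑ i, c i * v i := by
  simp only [Pi.add_apply, Pi.smul_apply, smul_eq_mul, add_mul, Finset.sum_add_distrib,
    mul_assoc, ← sq, ← Finset.mul_sum, hv, mul_zero, add_zero]

lemma sum_add_smul_sq_of_sum_sq_eq_zero {v : ι → ℂ} (hv : ∑ i, v i ^ 2 = 0)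
    (c : ι → ℂ) (a : ℂ) :
    ∑ i, (c + a • v) i ^ 2 = ∑ i, c i ^ 2 + 2 * a * ∑ i, c i * v i := by
  have h : ∀ i, (c + a • v) i ^ 2 = c i ^ 2 + 2 * a * (c i * v i) + a ^ 2 * v i ^ 2 :=
    fun i => by simp only [Pi.add_apply, Pi.smul_apply, smul_eq_mul]; ring
  simp only [h, Finset.sum_add_distrib, ← Finset.mul_sum, hv, mul_zero, add_zero]

lemma integral_gaussianPlaneWave {v : ι → ℂ} (hv : ∑ i, v i ^ 2 = 0) (n : ℕ) (c : ι → ℂ) :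
    ∫ x, gaussianPlaneWave c v n x
      = (Real.sqrt (2 * Real.pi) : ℂ) ^ Fintype.card ι * cexp ((∑ i, c i ^ 2) / 2)
        * (∑ i, c i * v i) ^ n := by
  induction n generalizing c with
  | zero => rw [integral_gaussianPlaneWave_zero, pow_zero, mul_one]
  | succ n ih =>
    set K := (Real.sqrt (2 * Real.pi) : ℂ) ^ Fintype.card ι
    set W := ∑ i, c i * v i with hW
    have hshift : (fun l : ℝ => ∫ x, gaussianPlaneWave (c + (l : ℂ) • v) v n x)
        = fun l : ℝ => K * cexp ((∑ i, c i ^ 2) / 2 + l * W) * W ^ n := by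
      funext l
      rw [ih, sum_add_smul_sq_of_sum_sq_eq_zero hv, sum_add_smul_mul_of_sum_sq_eq_zero hv, ← hW]
      ring_nf
    have hofReal : HasDerivAt (fun l : ℝ => (l : ℂ)) 1 0 := ofRealCLM.hasDerivAt
    have hrhs : HasDerivAt (fun l : ℝ => K * cexp ((∑ i, c i ^ 2) / 2 + l * W) * W ^ n)
        (K * cexp ((∑ i, c i ^ 2) / 2) * W ^ (n + 1)) 0 :=
      ((((hofReal.mul_const W).const_add _).cexp.const_mul K).mul_const (W ^ n)).congr_deriv
        (by simp only [ofReal_zero, zero_mul, add_zero]; ring)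
    rw [← hshift] at hrhs
    exact (hasDerivAt_integral_gaussianPlaneWave c v n).unique hrhs

lemma sum_sub_I_mul_sq_eq_zero {t s : ι → ℝ} (ht : ∑ i, t i ^ 2 = 1) (hs : ∑ i, s i ^ 2 = 1)
    (hts : ∑ i, t i * s i = 0) :
    ∑ i, ((t i : ℂ) - I * s i) ^ 2 = 0 := by
  have h : ∀ i, ((t i : ℂ) - I * s i) ^ 2
      = ((t i ^ 2 : ℝ) : ℂ) - 2 * I * ((t i * s i : ℝ) : ℂ) - ((s i ^ 2 : ℝ) : ℂ) := fun i => by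
    push_cast; linear_combination (s i : ℂ) ^ 2 * I_sq
  simp only [h, Finset.sum_sub_distrib, ← Finset.mul_sum, ← ofReal_sum, ht, hs, hts]
  simp

lemma sum_mul_sub_I_mul_sum_mul (a : ι → ℂ) (t s : ι → ℝ) :
    ∑ i, a i * t i - I * ∑ i, a i * s i = ∑ i, a i * ((t i : ℂ) - I * s i) := by
  rw [Finset.mul_sum, ← Finset.sum_sub_distrib]
  exact Finset.sum_congr rfl fun i _ => by ring

end SegalBargmann

open SegalBargmann

theorem segalBargmann_planeWave_general (m : ℕ) (t s : Fin m → ℝ)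
    (ht : ∑ j, t j ^ 2 = 1) (hs : ∑ j, s j ^ 2 = 1) (hts : ∑ j, t j * s j = 0) (k : ℕ)
    (z : Fin m → ℂ) :
    ((Real.sqrt (2 * Real.pi) ^ m : ℝ) : ℂ)⁻¹ *
      ∫ x : Fin m → ℝ,
        Complex.exp (-(∑ j, z j ^ 2) / 2 + (∑ j, (x j : ℂ) * z j) - (∑ j, (x j : ℂ) ^ 2) / 4)
          * ((∑ j, (x j : ℂ) * (t j : ℂ)) - Complex.I * ∑ j, (x j : ℂ) * (s j : ℂ)) ^ k
          * (Real.exp (-(∑ j, x j ^ 2) / 4) : ℂ)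
    = ((∑ j, z j * (t j : ℂ)) - Complex.I * ∑ j, z j * (s j : ℂ)) ^ k := by
  have hintegrand : ∀ x : Fin m → ℝ,
      cexp (-(∑ j, z j ^ 2) / 2 + (∑ j, (x j : ℂ) * z j) - (∑ j, (x j : ℂ) ^ 2) / 4)
          * ((∑ j, (x j : ℂ) * (t j : ℂ)) - I * ∑ j, (x j : ℂ) * (s j : ℂ)) ^ k
          * (Real.exp (-(∑ j, x j ^ 2) / 4) : ℂ)
        = cexp (-(∑ j, z j ^ 2) / 2)
          * gaussianPlaneWave z (fun j => (t j : ℂ) - I * s j) k x := fun x => by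
    rw [sum_mul_sub_I_mul_sum_mul, gaussianPlaneWave, mul_right_comm, ← mul_assoc, ofReal_exp,
      ← Complex.exp_add, ← Complex.exp_add]
    congr 2
    push_cast
    ring
  simp_rw [hintegrand]
  rw [integral_const_mul, integral_gaussianPlaneWave (sum_sub_I_mul_sq_eq_zero ht hs hts),
    Fintype.card_fin, sum_mul_sub_I_mul_sum_mul, ofReal_pow]
  rw [neg_div, Complex.exp_neg]
  field_simp

/-- Complex-scalar plane-wave form of Theorem 3.5 with `s = 0`: for orthonormal `t, s ∈ ℝ^m`,
the Segal–Bargmann transform of `(⟨x,t⟩ - i⟨x,s⟩)^k e^{-|x|²/4}` is `(⟨z,t⟩ - i⟨z,s⟩)^k`. -/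
theorem segalBargmann_planeWave (m : ℕ) (hm : 2 ≤ m) (t s : Fin m → ℝ)
    (ht : ∑ j, t j ^ 2 = 1) (hs : ∑ j, s j ^ 2 = 1) (hts : ∑ j, t j * s j = 0) (k : ℕ)
    (z : Fin m → ℂ) :
    ((Real.sqrt (2 * Real.pi) ^ m : ℝ) : ℂ)⁻¹ *
      ∫ x : Fin m → ℝ,
        Complex.exp (-(∑ j, z j ^ 2) / 2 + (∑ j, (x j : ℂ) * z j) - (∑ j, (x j : ℂ) ^ 2) / 4)
          * ((∑ j, (x j : ℂ) * (t j : ℂ)) - Complex.I * ∑ j, (x j : ℂ) * (s j : ℂ)) ^ k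
          * (Real.exp (-(∑ j, x j ^ 2) / 4) : ℂ)
    = ((∑ j, z j * (t j : ℂ)) - Complex.I * ∑ j, z j * (s j : ℂ)) ^ k :=
  segalBargmann_planeWave_general m t s ht hs hts k z
end
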